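/- arXiv:0803.1021 — 2 statements merged into one kernel-verified Lean document; each statement's English description precedes it below -/
import Mathlib

section
/- Let u ∈ C_c^∞(ℝ^{2n+1}) be a smooth compactly supported function on the Heisenberg group ℍ^n. Then Σ_{i,j=1}^{2n} ∫_{ℝ^{2n+1}} (X_i(X_j u))² dg = ∫_{ℝ^{2n+1}} (Δ_H u)² dg + 2n ∫_{ℝ^{2n+1}} (Tu)² dg, where dg denotes Lebesgue measure. -/
open scoped BigOperators
noncomputable section

/-- The Heisenberg group ℍⁿ identified with ℝⁿ × ℝⁿ × ℝ, with coordinates (x, y, t). -/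
abbrev Heis (n : ℕ) : Type := (Fin n → ℝ) × (Fin n → ℝ) × ℝ

/-- The left-invariant horizontal vector fields `X_1, …, X_{2n}` acting on functions:
`X_j u = ∂u/∂x_j − (y_j/2) ∂u/∂t` for `j = 1,…,n` (indices `0,…,n-1` here) and
`X_{n+j} u = ∂u/∂y_j + (x_j/2) ∂u/∂t` (indices `n,…,2n-1`). -/
noncomputable def Xf (n : ℕ) (i : Fin (2 * n)) (u : Heis n → ℝ) (p : Heis n) : ℝ :=
  if h : (i : ℕ) < n then
    fderiv ℝ u p (Pi.single ⟨(i : ℕ), h⟩ 1, 0, 0)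
      - p.2.1 ⟨(i : ℕ), h⟩ / 2 * fderiv ℝ u p (0, 0, 1)
  else
    fderiv ℝ u p (0, Pi.single ⟨(i : ℕ) - n, by have := i.isLt; omega⟩ 1, 0)
      + p.1 ⟨(i : ℕ) - n, by have := i.isLt; omega⟩ / 2 * fderiv ℝ u p (0, 0, 1)

/-- The vertical vector field `T u = ∂u/∂t`. -/
noncomputable def Tf (n : ℕ) (u : Heis n → ℝ) (p : Heis n) : ℝ :=
  fderiv ℝ u p (0, 0, 1)

/-- The horizontal Laplacian `Δ_H u = Σ_{i=1}^{2n} X_i (X_i u)`. -/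
noncomputable def ΔH (n : ℕ) (u : Heis n → ℝ) (p : Heis n) : ℝ :=
  ∑ i : Fin (2 * n), Xf n i (Xf n i u) p

/-!
Each `X_i` differentiates along a vector field `v_i + ℓ_i(p) ∂_t` with `ℓ_i` linear and
`ℓ_i(∂_t) = 0`. Such a field is divergence free, so `X_i` is skew-adjoint on `C_c^∞`; moreover `T`
commutes with every `X_i`, and `[X_i, X_j] = c_ij T` where `c_ij = ±1` if `{i, j} = {k, n + k}` and
`c_ij = 0` otherwise. Integrating by parts twice and commuting the fields gives, for each pair,
`∫ (X_i X_j u)² = ∫ X_j X_j u · X_i X_i u + 2 c_ij ∫ X_i X_j u · T u`. Summing over `i, j`, the first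
terms add up to `∫ (Δ_H u)²`, and by antisymmetry
`∑ c_ij X_i X_j u = ½ ∑ c_ij [X_i, X_j] u = ½ ∑ c_ij² T u = n T u`.
-/

open MeasureTheory
open scoped ContDiff

section ShearDeriv

variable {E : Type*} [NormedAddCommGroup E] [NormedSpace ℝ E]

def shearDeriv (w v : E) (ℓ : E →L[ℝ] ℝ) (f : E → ℝ) (p : E) : ℝ :=
  fderiv ℝ f p v + ℓ p * fderiv ℝ f p w

theorem ContDiff.shearDeriv {k m : WithTop ℕ∞} {f : E → ℝ} (hf : ContDiff ℝ k f)
    (hmk : m + 1 ≤ k) (w v : E) (ℓ : E →L[ℝ] ℝ) : ContDiff ℝ m (shearDeriv w v ℓ f) := by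
  have hf' := hf.fderiv_right hmk
  exact (hf'.clm_apply contDiff_const).add (ℓ.contDiff.mul (hf'.clm_apply contDiff_const))

theorem HasCompactSupport.shearDeriv {f : E → ℝ} (hf : HasCompactSupport f)
    (w v : E) (ℓ : E →L[ℝ] ℝ) : HasCompactSupport (shearDeriv w v ℓ f) :=
  (hf.fderiv_apply ℝ v).add (hf.fderiv_apply ℝ w).mul_left

theorem fderiv_shearDeriv_apply {f : E → ℝ} {p : E} (hf : ContDiff ℝ 2 f) (w v z : E)
    (ℓ : E →L[ℝ] ℝ) :
    fderiv ℝ (shearDeriv w v ℓ f) p z =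
      fderiv ℝ (fderiv ℝ f) p z v + ℓ p * fderiv ℝ (fderiv ℝ f) p z w
        + ℓ z * fderiv ℝ f p w := by
  have h2 : DifferentiableAt ℝ (fderiv ℝ f) p :=
    (hf.fderiv_right (m := 1) (by norm_num)).differentiable (by norm_num) p
  have hd (u : E) : DifferentiableAt ℝ (fun q => fderiv ℝ f q u) p :=
    h2.clm_apply (differentiableAt_const u)
  unfold shearDeriv
  rw [fderiv_fun_add (hd v) (ℓ.differentiableAt.fun_mul (hd w)),
    fderiv_fun_mul ℓ.differentiableAt (hd w), fderiv_clm_apply h2 (differentiableAt_const _),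
    fderiv_clm_apply h2 (differentiableAt_const _)]
  simp only [fderiv_fun_const, Pi.zero_apply, ContinuousLinearMap.comp_zero, zero_add,
    ContinuousLinearMap.fderiv, add_apply, ContinuousLinearMap.flip_apply,
    smul_apply, smul_eq_mul]
  ring

/-- The second derivative of `f` is symmetric, so only the derivatives of the coefficients
`ℓ`, `m` survive in the commutator. -/
theorem shearDeriv_comm {f : E → ℝ} (hf : ContDiff ℝ 2 f) {w : E} (v v' : E)
    {ℓ m : E →L[ℝ] ℝ} (hℓ : ℓ w = 0) (hm : m w = 0) (p : E) :
    shearDeriv w v ℓ (shearDeriv w v' m f) p - shearDeriv w v' m (shearDeriv w v ℓ f) p =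
      (m v - ℓ v') * fderiv ℝ f p w := by
  have hsymm := hf.contDiffAt.isSymmSndFDerivAt (x := p) (by simp)
  simp only [shearDeriv, fderiv_shearDeriv_apply hf, hℓ, hm, hsymm.eq v v', hsymm.eq v w,
    hsymm.eq v' w]
  ring

def IsTestFunction (f : E → ℝ) : Prop := ContDiff ℝ ∞ f ∧ HasCompactSupport f

theorem IsTestFunction.contDiff {f : E → ℝ} (hf : IsTestFunction f) (k : ℕ) : ContDiff ℝ k f :=
  hf.1.of_le (by exact_mod_cast le_top)

theorem IsTestFunction.shearDeriv {f : E → ℝ} (hf : IsTestFunction f) (w v : E)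
    (ℓ : E →L[ℝ] ℝ) : IsTestFunction (shearDeriv w v ℓ f) :=
  ⟨hf.1.shearDeriv (by simp) w v ℓ, hf.2.shearDeriv w v ℓ⟩

theorem IsTestFunction.integrable_mul [MeasurableSpace E] [OpensMeasurableSpace E]
    {μ : Measure E} [IsFiniteMeasureOnCompacts μ] {f g : E → ℝ} (hf : IsTestFunction f)
    (hg : IsTestFunction g) : Integrable (fun p => f p * g p) μ :=
  (hf.1.continuous.mul hg.1.continuous).integrable_of_hasCompactSupport hf.2.mul_right

variable [FiniteDimensional ℝ E] [MeasurableSpace E] [BorelSpace E] {μ : Measure E}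
  [μ.IsAddHaarMeasure]

/-- Since `ℓ w = 0`, the term `ℓ p * ∂_w f` equals `∂_w (ℓ * f)`, so the field is divergence
free and both of its parts can be integrated by parts. -/
theorem integral_shearDeriv_mul {f g : E → ℝ} (hf : ContDiff ℝ 1 f) (hg : ContDiff ℝ 1 g)
    (hfc : HasCompactSupport f) {w : E} (v : E) {ℓ : E →L[ℝ] ℝ} (hℓ : ℓ w = 0) :
    ∫ p, shearDeriv w v ℓ f p * g p ∂μ = -∫ p, f p * shearDeriv w v ℓ g p ∂μ := by
  have hint {a b : E → ℝ} (ha : Continuous a) (hb : Continuous b) (hac : HasCompactSupport a) :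
      Integrable (fun p => a p * b p) μ :=
    (ha.mul hb).integrable_of_hasCompactSupport hac.mul_right
  have hcont {h : E → ℝ} (hh : ContDiff ℝ 1 h) (u : E) : Continuous (fun p => fderiv ℝ h p u) :=
    (hh.continuous_fderiv one_ne_zero).clm_apply continuous_const
  have hibp {h : E → ℝ} (hh : ContDiff ℝ 1 h) (u : E) :
      ∫ p, fderiv ℝ f p u * h p ∂μ = -∫ p, f p * fderiv ℝ h p u ∂μ := by
    rw [integral_mul_fderiv_eq_neg_fderiv_mul_of_integrable (hint (hcont hf u) hh.continuous
      (hfc.fderiv_apply ℝ u)) (hint hf.continuous (hcont hh u) hfc)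
      (hint hf.continuous hh.continuous hfc) (fun p _ => hf.differentiable one_ne_zero p)
      (fun p _ => hh.differentiable one_ne_zero p), neg_neg]
  have hℓg : ContDiff ℝ 1 (fun p => ℓ p * g p) := ℓ.contDiff.mul hg
  have hderiv (p : E) : fderiv ℝ (fun q => ℓ q * g q) p w = ℓ p * fderiv ℝ g p w := by
    rw [fderiv_fun_mul ℓ.differentiableAt (hg.differentiable one_ne_zero p)]
    simp [hℓ]
  calc ∫ p, shearDeriv w v ℓ f p * g p ∂μ
      = ∫ p, fderiv ℝ f p v * g p ∂μ + ∫ p, fderiv ℝ f p w * (ℓ p * g p) ∂μ := by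
        rw [← integral_add (hint (hcont hf v) hg.continuous (hfc.fderiv_apply ℝ v))
          (hint (hcont hf w) hℓg.continuous (hfc.fderiv_apply ℝ w))]
        simp only [shearDeriv]
        congr 1 with p
        ring
    _ = -(∫ p, f p * fderiv ℝ g p v ∂μ + ∫ p, f p * (ℓ p * fderiv ℝ g p w) ∂μ) := by
        simp only [hibp hg, hibp hℓg, hderiv]
        ring
    _ = -∫ p, f p * shearDeriv w v ℓ g p ∂μ := by
        rw [← integral_add (hint hf.continuous (hcont hg v) hfc)
          (hint (b := fun p => ℓ p * fderiv ℝ g p w) hf.continuous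
            (ℓ.continuous.mul (hcont hg w)) hfc)]
        simp only [shearDeriv]
        congr 2 with p
        ring

end ShearDeriv

section Heisenberg

variable {n : ℕ}

-- Instance search does not see through `volume` on a product to `Measure.prod`.
instance : (volume : Measure ((Fin n → ℝ) × ℝ)).IsAddHaarMeasure :=
  Measure.prod.instIsAddHaarMeasure _ _

instance : (volume : Measure (Heis n)).IsAddHaarMeasure :=
  Measure.prod.instIsAddHaarMeasure _ _

def heisVec (i : Fin (2 * n)) : Heis n :=
  if h : (i : ℕ) < n then (Pi.single ⟨i, h⟩ 1, 0, 0)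
  else (0, Pi.single ⟨i - n, by omega⟩ 1, 0)

def heisCoeff (i : Fin (2 * n)) : Heis n →L[ℝ] ℝ :=
  if h : (i : ℕ) < n then
    -(2⁻¹ : ℝ) • (ContinuousLinearMap.proj ⟨i, h⟩ ∘L ContinuousLinearMap.fst ℝ _ ℝ ∘L
      ContinuousLinearMap.snd ℝ (Fin n → ℝ) _)
  else (2⁻¹ : ℝ) • (ContinuousLinearMap.proj ⟨i - n, by omega⟩ ∘L ContinuousLinearMap.fst ℝ _ _)

theorem heisCoeff_apply (i : Fin (2 * n)) (p : Heis n) :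
    heisCoeff i p =
      if h : (i : ℕ) < n then -p.2.1 ⟨i, h⟩ / 2 else p.1 ⟨i - n, by omega⟩ / 2 := by
  unfold heisCoeff
  split_ifs
  · simp only [smul_apply, ContinuousLinearMap.comp_apply,
      ContinuousLinearMap.coe_snd', ContinuousLinearMap.coe_fst', ContinuousLinearMap.proj_apply,
      smul_eq_mul, neg_mul]
    ring
  · simp only [smul_apply, ContinuousLinearMap.comp_apply,
      ContinuousLinearMap.coe_fst', ContinuousLinearMap.proj_apply, smul_eq_mul]
    ring

theorem heisCoeff_vert (i : Fin (2 * n)) : heisCoeff i ((0, 0, 1) : Heis n) = 0 := by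
  rw [heisCoeff_apply]; split_ifs <;> simp

theorem Xf_eq_shearDeriv (i : Fin (2 * n)) :
    Xf n i = shearDeriv (0, 0, 1) (heisVec i) (heisCoeff i) := by
  ext f p
  simp only [Xf, shearDeriv, heisVec, heisCoeff_apply]
  split_ifs <;> ring

theorem Tf_eq_shearDeriv : Tf n = shearDeriv (0, 0, 1) (0, 0, 1) 0 := by
  ext f p
  simp [Tf, shearDeriv]

def heisBracket (i j : Fin (2 * n)) : ℝ := heisCoeff j (heisVec i) - heisCoeff i (heisVec j)

theorem heisBracket_eq (i j : Fin (2 * n)) :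
    heisBracket i j = if (j : ℕ) = i + n then 1 else if (i : ℕ) = j + n then -1 else 0 := by
  have := i.isLt; have := j.isLt
  simp only [heisBracket, heisVec, heisCoeff_apply]
  by_cases hi : (i : ℕ) < n <;> by_cases hj : (j : ℕ) < n <;>
    simp only [hi, hj, ↓reduceDIte, Pi.single_apply, Pi.zero_apply, Fin.ext_iff] <;> split_ifs <;> (try norm_num) <;> omega

def heisPartner (i : Fin (2 * n)) : Fin (2 * n) :=
  if h : (i : ℕ) < n then ⟨i + n, by omega⟩ else ⟨i - n, by omega⟩

theorem heisBracket_sq (i j : Fin (2 * n)) :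
    heisBracket i j ^ 2 = if j = heisPartner i then 1 else 0 := by
  have := i.isLt; have := j.isLt
  rw [heisBracket_eq, heisPartner]
  split_ifs <;> simp only [Fin.ext_iff] at * <;> (try norm_num) <;> omega

theorem sum_heisBracket_sq (i : Fin (2 * n)) : ∑ j, heisBracket i j ^ 2 = 1 := by
  simp [heisBracket_sq]

theorem IsTestFunction.Xf {f : Heis n → ℝ} (hf : IsTestFunction f) (i : Fin (2 * n)) :
    IsTestFunction (Xf n i f) := by
  rw [Xf_eq_shearDeriv]; exact hf.shearDeriv _ _ _

theorem IsTestFunction.Tf {f : Heis n → ℝ} (hf : IsTestFunction f) :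
    IsTestFunction (Tf n f) := by
  rw [Tf_eq_shearDeriv]; exact hf.shearDeriv _ _ _

theorem integral_Xf_mul (i : Fin (2 * n)) {f g : Heis n → ℝ} (hf : ContDiff ℝ 1 f)
    (hg : ContDiff ℝ 1 g) (hfc : HasCompactSupport f) :
    ∫ p, Xf n i f p * g p = -∫ p, f p * Xf n i g p := by
  rw [Xf_eq_shearDeriv]
  exact integral_shearDeriv_mul hf hg hfc _ (heisCoeff_vert i)

theorem Xf_comm {f : Heis n → ℝ} (hf : ContDiff ℝ 2 f) (i j : Fin (2 * n)) (p : Heis n) :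
    Xf n i (Xf n j f) p = Xf n j (Xf n i f) p + heisBracket i j * Tf n f p := by
  rw [Xf_eq_shearDeriv, Xf_eq_shearDeriv, ← sub_eq_iff_eq_add',
    shearDeriv_comm hf _ _ (heisCoeff_vert i) (heisCoeff_vert j), heisBracket, Tf]

theorem Tf_Xf_comm {f : Heis n → ℝ} (hf : ContDiff ℝ 2 f) (i : Fin (2 * n)) (p : Heis n) :
    Tf n (Xf n i f) p = Xf n i (Tf n f) p := by
  rw [Xf_eq_shearDeriv, Tf_eq_shearDeriv, ← sub_eq_zero,
    shearDeriv_comm hf _ _ (by simp) (heisCoeff_vert i), heisCoeff_vert]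
  simp

theorem sum_heisBracket_mul_Xf_Xf {f : Heis n → ℝ} (hf : ContDiff ℝ 2 f) (p : Heis n) :
    ∑ i, ∑ j, heisBracket i j * Xf n i (Xf n j f) p = n * Tf n f p := by
  have hswap : ∑ i, ∑ j, heisBracket i j * Xf n i (Xf n j f) p
      = -∑ i, ∑ j, heisBracket i j * Xf n j (Xf n i f) p := by
    rw [Finset.sum_comm]
    simp only [heisBracket, ← Finset.sum_neg_distrib]
    congr! 2
    ring
  have hcomm (i j : Fin (2 * n)) :
      Xf n i (Xf n j f) p - Xf n j (Xf n i f) p = heisBracket i j * Tf n f p := by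
    rw [Xf_comm hf i j p]; ring
  have hdouble : ∑ i, ∑ j, heisBracket i j * Xf n i (Xf n j f) p
      - ∑ i, ∑ j, heisBracket i j * Xf n j (Xf n i f) p = 2 * n * Tf n f p := by
    simp only [← Finset.sum_sub_distrib, ← mul_sub, hcomm, ← mul_assoc, ← sq, ← Finset.sum_mul,
      sum_heisBracket_sq]
    simp
  linarith

variable {u : Heis n → ℝ}

theorem integral_sq_Xf_Xf (hu : IsTestFunction u) (i j : Fin (2 * n)) :
    ∫ p, Xf n i (Xf n j u) p ^ 2 =
      (∫ p, Xf n j (Xf n j u) p * Xf n i (Xf n i u) p)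
        + 2 * (heisBracket i j * ∫ p, Xf n i (Xf n j u) p * Tf n u p) := by
  set c := heisBracket i j
  have hXu (k : Fin (2 * n)) := hu.Xf k
  have hXXu (k l : Fin (2 * n)) := (hu.Xf l).Xf k
  calc ∫ p, Xf n i (Xf n j u) p ^ 2
      = (∫ p, Xf n i (Xf n j u) p * Xf n j (Xf n i u) p)
          + c * ∫ p, Xf n i (Xf n j u) p * Tf n u p := by
        rw [← integral_const_mul, ← integral_add ((hXXu i j).integrable_mul (hXXu j i))
          (((hXXu i j).integrable_mul hu.Tf).const_mul c)]
        congr 1 with p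
        linear_combination Xf n i (Xf n j u) p * Xf_comm (hu.contDiff 2) i j p
    _ = -((∫ p, Xf n j u p * Xf n j (Xf n i (Xf n i u)) p)
          + c * ∫ p, Xf n j u p * Xf n i (Tf n u) p)
          + c * ∫ p, Xf n i (Xf n j u) p * Tf n u p := by
        rw [integral_Xf_mul i ((hXu j).contDiff 1) ((hXXu j i).contDiff 1) (hXu j).2,
          ← integral_const_mul c fun p => Xf n j u p * Xf n i (Tf n u) p,
          ← integral_add ((hXu j).integrable_mul ((hXXu i i).Xf j))
          (((hXu j).integrable_mul (hu.Tf.Xf i)).const_mul c)]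
        congr 3 with p
        rw [Xf_comm ((hXu i).contDiff 2), Tf_Xf_comm (hu.contDiff 2)]
        ring
    _ = (∫ p, Xf n j (Xf n j u) p * Xf n i (Xf n i u) p)
          + 2 * (c * ∫ p, Xf n i (Xf n j u) p * Tf n u p) := by
        rw [integral_Xf_mul j ((hXu j).contDiff 1) ((hXXu i i).contDiff 1) (hXu j).2,
          integral_Xf_mul i ((hXu j).contDiff 1) (hu.Tf.contDiff 1) (hXu j).2]
        ring

theorem integral_ΔH_sq (hu : IsTestFunction u) :
    ∫ p, ΔH n u p ^ 2 = ∑ i, ∑ j, ∫ p, Xf n j (Xf n j u) p * Xf n i (Xf n i u) p := by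
  have hint (i j : Fin (2 * n)) :=
    ((hu.Xf i).Xf i).integrable_mul (μ := volume) ((hu.Xf j).Xf j)
  simp only [ΔH, sq, Finset.sum_mul_sum]
  rw [integral_finsetSum _ fun i _ => integrable_finsetSum _ fun j _ => hint i j, Finset.sum_comm]
  simp only [integral_finsetSum _ fun j _ => hint _ j]

theorem sum_heisBracket_mul_integral (hu : IsTestFunction u) :
    ∑ i, ∑ j, heisBracket i j * ∫ p, Xf n i (Xf n j u) p * Tf n u p =
      n * ∫ p, Tf n u p ^ 2 := by
  have hint (i j : Fin (2 * n)) :=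
    (((hu.Xf j).Xf i).integrable_mul (μ := volume) hu.Tf).const_mul (heisBracket i j)
  calc ∑ i, ∑ j, heisBracket i j * ∫ p, Xf n i (Xf n j u) p * Tf n u p
      = ∫ p, (∑ i, ∑ j, heisBracket i j * Xf n i (Xf n j u) p) * Tf n u p := by
        simp only [Finset.sum_mul, mul_assoc]
        rw [integral_finsetSum _ fun i _ => integrable_finsetSum _ fun j _ => hint i j]
        simp only [integral_finsetSum _ fun j _ => hint _ j, integral_const_mul]
    _ = n * ∫ p, Tf n u p ^ 2 := by
        simp only [sum_heisBracket_mul_Xf_Xf (hu.contDiff 2), mul_assoc, ← sq, integral_const_mul]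

end Heisenberg

/-- For u ∈ C_c^∞(ℍⁿ):
Σ_{i,j} ∫ (X_i X_j u)² = ∫ (Δ_H u)² + 2n ∫ (Tu)². -/
theorem heisenberg_global_unsym_hessian_identity (n : ℕ) (u : Heis n → ℝ)
    (hu : ContDiff ℝ (⊤ : ℕ∞) u) (hc : HasCompactSupport u) :
    ∑ i : Fin (2 * n), ∑ j : Fin (2 * n), ∫ p : Heis n, (Xf n i (Xf n j u) p) ^ 2
      = (∫ p : Heis n, (ΔH n u p) ^ 2)
        + 2 * n * ∫ p : Heis n, (Tf n u p) ^ 2 := by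
  have hu' : IsTestFunction u := ⟨hu, hc⟩
  simp only [integral_sq_Xf_Xf hu', Finset.sum_add_distrib, ← Finset.mul_sum]
  rw [integral_ΔH_sq hu', sum_heisBracket_mul_integral hu']
  ring
end
end

section
/- Let u ∈ C_c^∞(ℝ³) be a smooth compactly supported function on the first Heisenberg group ℍ¹. Then ∫_{ℝ³} det(∇²_H u) dg + (3/4) ∫_{ℝ³} (Tu)² dg = 0, where det(∇²_H u) = u_{,11} u_{,22} − u_{,12}² is the determinant of the 2×2 symmetrized horizontal Hessian and dg denotes Lebesgue measure. -/
open scoped BigOperators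
noncomputable section

/-!
The horizontal fields `X = ∂ₓ - (y/2) ∂ₜ`, `Y = ∂ᵧ + (x/2) ∂ₜ` and `T = ∂ₜ` are divergence free,
so `∫ V h = 0` for every compactly supported `h`. Leibniz's rule together with the commutation
relations `[X, Y] = T`, `[X, T] = [Y, T] = 0` turns the integrand into such derivatives:
`det ∇²_H u + (3/4) (Tu)² = X (Xu·YYu + ½ Yu·Tu) - Y (Xu·YXu + (3/2) Xu·Tu) - ½ T (Xu·Yu)`.
-/

open MeasureTheory VectorField
open scoped ContDiff

section LieDeriv

variable {E F : Type*} [NormedAddCommGroup E] [NormedSpace ℝ E]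
  [NormedAddCommGroup F] [NormedSpace ℝ F]

def lieDeriv (V : E → E) (f : E → F) : E → F := fun x => fderiv ℝ f x (V x)

theorem ContDiff.lieDeriv {n m : WithTop ℕ∞} {V : E → E} {f : E → F} (hV : ContDiff ℝ n V)
    (hf : ContDiff ℝ m f) (hnm : n + 1 ≤ m) : ContDiff ℝ n (_root_.lieDeriv V f) :=
  (hf.fderiv_right hnm).clm_apply hV

@[fun_prop]
theorem ContDiff.lieDeriv_infty {V : E → E} {f : E → F} (hV : ContDiff ℝ ∞ V)
    (hf : ContDiff ℝ ∞ f) : ContDiff ℝ ∞ (_root_.lieDeriv V f) :=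
  hV.lieDeriv hf (by simp)

theorem HasCompactSupport.lieDeriv {f : E → F} (hf : HasCompactSupport f) (V : E → E) :
    HasCompactSupport (lieDeriv V f) :=
  hf.mono' fun x hx => support_fderiv_subset ℝ fun h => hx (by simp [_root_.lieDeriv, h])

theorem lieDeriv_add {V : E → E} {f g : E → F} (hf : Differentiable ℝ f)
    (hg : Differentiable ℝ g) : lieDeriv V (f + g) = lieDeriv V f + lieDeriv V g := by
  ext x; simp [lieDeriv, fderiv_add (hf x) (hg x)]

theorem lieDeriv_const_smul {V : E → E} {f : E → F} (hf : Differentiable ℝ f) (c : ℝ) :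
    lieDeriv V (c • f) = c • lieDeriv V f := by
  ext x; simp [lieDeriv, fderiv_const_smul (hf x) c]

theorem lieDeriv_mul {V : E → E} {f g : E → ℝ} (hf : Differentiable ℝ f)
    (hg : Differentiable ℝ g) : lieDeriv V (f * g) = lieDeriv V f * g + f * lieDeriv V g := by
  ext x; simp [lieDeriv, fderiv_mul (hf x) (hg x)]; ring

theorem lieDeriv_lieDeriv_sub_lieDeriv_lieDeriv {V W : E → E} {f : E → F}
    (hV : Differentiable ℝ V) (hW : Differentiable ℝ W) (hf : ContDiff ℝ 2 f) :
    lieDeriv V (lieDeriv W f) - lieDeriv W (lieDeriv V f) = lieDeriv (lieBracket ℝ V W) f := by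
  ext x
  exact (fderiv_apply_lieBracket hf.contDiffAt (by simp) (hW x) (hV x)).symm

end LieDeriv

section Integration

variable {E : Type*} [NormedAddCommGroup E] [NormedSpace ℝ E] [MeasurableSpace E] [BorelSpace E]
  (μ : Measure E)

theorem integrable_lieDeriv [IsFiniteMeasureOnCompacts μ] {V : E → E} {h : E → ℝ}
    (hV : Continuous V) (hh : ContDiff ℝ 1 h) (hh' : HasCompactSupport h) :
    Integrable (lieDeriv V h) μ :=
  ((hh.continuous_fderiv one_ne_zero).clm_apply hV).integrable_of_hasCompactSupport
    (hh'.lieDeriv V)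

variable [FiniteDimensional ℝ E] [μ.IsAddHaarMeasure]

theorem integral_mul_fderiv_eq_zero {c h : E → ℝ} {w : E} (hc : Differentiable ℝ c)
    (hcw : ∀ x, fderiv ℝ c x w = 0) (hh : ContDiff ℝ 1 h) (hh' : HasCompactSupport h) :
    ∫ x, c x * fderiv ℝ h x w ∂μ = 0 := by
  have hdh : Continuous (fderiv ℝ h · w) :=
    (hh.continuous_fderiv one_ne_zero).clm_apply continuous_const
  rw [integral_mul_fderiv_eq_neg_fderiv_mul_of_integrable (by simp [hcw])
    ((hc.continuous.mul hdh).integrable_of_hasCompactSupport (hh'.fderiv_apply ℝ w).mul_left)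
    ((hc.continuous.mul hh.continuous).integrable_of_hasCompactSupport hh'.mul_left)
    (fun x _ => hc x) (fun x _ => hh.differentiable one_ne_zero x)]
  simp [hcw]

/-- The field `v + c • w` is divergence free when `c` is constant along `w`. -/
theorem integral_lieDeriv_eq_zero {V : E → E} {c h : E → ℝ} {v w : E}
    (hV : ∀ x, V x = v + c x • w) (hc : Differentiable ℝ c) (hcw : ∀ x, fderiv ℝ c x w = 0)
    (hh : ContDiff ℝ 1 h) (hh' : HasCompactSupport h) : ∫ x, lieDeriv V h x ∂μ = 0 := by
  have hsplit : lieDeriv V h = fun x => fderiv ℝ h x v + c x * fderiv ℝ h x w := by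
    ext x; simp [lieDeriv, hV]
  have hv : ∫ x, fderiv ℝ h x v ∂μ = 0 := by
    simpa using integral_mul_fderiv_eq_zero μ (c := fun _ => 1) (w := v)
      (differentiable_const _) (by simp) hh hh'
  rw [hsplit, integral_add, hv, integral_mul_fderiv_eq_zero μ hc hcw hh hh', add_zero]
  · exact integrable_lieDeriv μ continuous_const hh hh'
  · exact (hc.continuous.mul ((hh.continuous_fderiv one_ne_zero).clm_apply continuous_const))
      |>.integrable_of_hasCompactSupport (hh'.fderiv_apply ℝ w).mul_left

end Integration

namespace Heis

instance (n : ℕ) : (volume : Measure (Heis n)).IsAddHaarMeasure :=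
  have : (volume : Measure ((Fin n → ℝ) × ℝ)).IsAddHaarMeasure :=
    Measure.prod.instIsAddHaarMeasure _ _
  Measure.prod.instIsAddHaarMeasure _ _

def e₁ : Heis 1 := (Pi.single 0 1, 0, 0)
def e₂ : Heis 1 := (0, Pi.single 0 1, 0)
def e₃ : Heis 1 := (0, 0, 1)

def xCoord : Heis 1 →L[ℝ] ℝ := ContinuousLinearMap.proj 0 ∘L ContinuousLinearMap.fst ℝ _ _
def yCoord : Heis 1 →L[ℝ] ℝ :=
  ContinuousLinearMap.proj 0 ∘L ContinuousLinearMap.fst ℝ _ _ ∘L ContinuousLinearMap.snd ℝ _ _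

def xField (p : Heis 1) : Heis 1 := e₁ + (-2⁻¹ * yCoord p) • e₃
def yField (p : Heis 1) : Heis 1 := e₂ + (2⁻¹ * xCoord p) • e₃
def tField : Heis 1 → Heis 1 := fun _ => e₃

@[simp] theorem xCoord_apply (p : Heis 1) : xCoord p = p.1 0 := rfl
@[simp] theorem yCoord_apply (p : Heis 1) : yCoord p = p.2.1 0 := rfl

notation "𝐗" => lieDeriv Heis.xField
notation "𝐘" => lieDeriv Heis.yField
notation "𝐓" => lieDeriv Heis.tField

@[fun_prop] theorem contDiff_xField : ContDiff ℝ ∞ xField := by unfold xField; fun_prop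
@[fun_prop] theorem contDiff_yField : ContDiff ℝ ∞ yField := by unfold yField; fun_prop
@[fun_prop] theorem contDiff_tField : ContDiff ℝ ∞ tField := contDiff_const

theorem fderiv_xField (x v : Heis 1) : fderiv ℝ xField x v = (-2⁻¹ * yCoord v) • e₃ := by
  unfold xField
  rw [(((yCoord.hasFDerivAt (x := x)).const_mul (-2⁻¹)).smul_const e₃ |>.const_add e₁).fderiv]
  simp

theorem fderiv_yField (x v : Heis 1) : fderiv ℝ yField x v = (2⁻¹ * xCoord v) • e₃ := by
  unfold yField
  rw [(((xCoord.hasFDerivAt (x := x)).const_mul 2⁻¹).smul_const e₃ |>.const_add e₂).fderiv]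
  simp

theorem lieBracket_xField_yField : lieBracket ℝ xField yField = tField := by
  ext x <;> simp [lieBracket, fderiv_xField, fderiv_yField, xField, yField, tField, e₁, e₂, e₃]
  norm_num

theorem lieBracket_xField_tField : lieBracket ℝ xField tField = 0 := by
  unfold tField
  ext x <;> simp [lieBracket, fderiv_xField, e₃]

theorem lieBracket_yField_tField : lieBracket ℝ yField tField = 0 := by
  unfold tField
  ext x <;> simp [lieBracket, fderiv_yField, e₃]

variable {f : Heis 1 → ℝ}

theorem lieDeriv_xField_yField (hf : ContDiff ℝ 2 f) : 𝐗 (𝐘 f) = 𝐘 (𝐗 f) + 𝐓 f := by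
  rw [← sub_eq_iff_eq_add', lieDeriv_lieDeriv_sub_lieDeriv_lieDeriv
    (contDiff_xField.differentiable (by simp)) (contDiff_yField.differentiable (by simp)) hf,
    lieBracket_xField_yField]

theorem lieDeriv_xField_tField (hf : ContDiff ℝ 2 f) : 𝐗 (𝐓 f) = 𝐓 (𝐗 f) := by
  rw [← sub_eq_zero, lieDeriv_lieDeriv_sub_lieDeriv_lieDeriv
    (contDiff_xField.differentiable (by simp)) (contDiff_tField.differentiable (by simp)) hf,
    lieBracket_xField_tField]
  ext; simp [lieDeriv]

theorem lieDeriv_yField_tField (hf : ContDiff ℝ 2 f) : 𝐘 (𝐓 f) = 𝐓 (𝐘 f) := by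
  rw [← sub_eq_zero, lieDeriv_lieDeriv_sub_lieDeriv_lieDeriv
    (contDiff_yField.differentiable (by simp)) (contDiff_tField.differentiable (by simp)) hf,
    lieBracket_yField_tField]
  ext; simp [lieDeriv]

theorem Xf_zero (h : 0 < 2 * 1) : Xf 1 ⟨0, h⟩ = 𝐗 := by
  ext u p
  rw [Xf, dif_pos (by simp)]
  change fderiv ℝ u p e₁ - p.2.1 0 / 2 * fderiv ℝ u p e₃ = fderiv ℝ u p (xField p)
  simp only [xField, map_add, map_smul, smul_eq_mul, yCoord_apply]
  ring

theorem Xf_one (h : 1 < 2 * 1) : Xf 1 ⟨1, h⟩ = 𝐘 := by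
  ext u p
  rw [Xf, dif_neg (by simp)]
  change fderiv ℝ u p e₂ + p.1 0 / 2 * fderiv ℝ u p e₃ = fderiv ℝ u p (yField p)
  simp only [yField, map_add, map_smul, smul_eq_mul, xCoord_apply]
  ring

theorem Tf_one : Tf 1 = 𝐓 := rfl

variable {h : Heis 1 → ℝ}

theorem integral_lieDeriv_xField (hh : ContDiff ℝ 1 h) (hh' : HasCompactSupport h) :
    ∫ p, 𝐗 h p = 0 :=
  integral_lieDeriv_eq_zero volume (fun _ => rfl) (by fun_prop)
    (fun x => by rw [((yCoord.hasFDerivAt (x := x)).const_mul _).fderiv]; simp [e₃]) hh hh'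

theorem integral_lieDeriv_yField (hh : ContDiff ℝ 1 h) (hh' : HasCompactSupport h) :
    ∫ p, 𝐘 h p = 0 :=
  integral_lieDeriv_eq_zero volume (fun _ => rfl) (by fun_prop)
    (fun x => by rw [((xCoord.hasFDerivAt (x := x)).const_mul _).fderiv]; simp [e₃]) hh hh'

theorem integral_lieDeriv_tField (hh : ContDiff ℝ 1 h) (hh' : HasCompactSupport h) :
    ∫ p, 𝐓 h p = 0 :=
  integral_lieDeriv_eq_zero volume (c := 0) (v := e₃) (w := e₃) (fun _ => by simp [tField])
    (differentiable_const _) (by simp) hh hh'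

theorem hessian_det_eq_divergence (hu : ContDiff ℝ ∞ f) (p : Heis 1) :
    𝐗 (𝐗 f) p * 𝐘 (𝐘 f) p - ((𝐗 (𝐘 f) p + 𝐘 (𝐗 f) p) / 2) ^ 2 =
      𝐗 (𝐗 f * 𝐘 (𝐘 f) + (2⁻¹ : ℝ) • (𝐘 f * 𝐓 f)) p
        - 𝐘 (𝐗 f * 𝐘 (𝐗 f) + (3 / 2 : ℝ) • (𝐗 f * 𝐓 f)) p
        - 2⁻¹ * 𝐓 (𝐗 f * 𝐘 f) p - 3 / 4 * 𝐓 f p ^ 2 := by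
  have h2 {g : Heis 1 → ℝ} (hg : ContDiff ℝ ∞ g) : ContDiff ℝ 2 g := contDiff_infty.1 hg 2
  simp (disch := fun_prop (disch := simp)) only [lieDeriv_add, lieDeriv_mul, lieDeriv_const_smul]
  rw [lieDeriv_xField_yField (f := 𝐘 f) (h2 (by fun_prop)), lieDeriv_xField_yField (h2 hu)]
  simp (disch := fun_prop (disch := simp)) only [lieDeriv_add]
  rw [lieDeriv_xField_tField (h2 hu), lieDeriv_yField_tField (h2 hu)]
  simp only [Pi.add_apply, Pi.mul_apply, Pi.smul_apply, smul_eq_mul]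
  ring

theorem integral_hessian_det (hf : ContDiff ℝ ∞ f) (hc : HasCompactSupport f) :
    ∫ p, (𝐗 (𝐗 f) p * 𝐘 (𝐘 f) p - ((𝐗 (𝐘 f) p + 𝐘 (𝐗 f) p) / 2) ^ 2) =
      -(3 / 4 * ∫ p, 𝐓 f p ^ 2) := by
  have hX : ContDiff ℝ ∞ (𝐗 f) := by fun_prop
  have hY : ContDiff ℝ ∞ (𝐘 f) := by fun_prop
  have hT : ContDiff ℝ ∞ (𝐓 f) := by fun_prop
  have hcs (V : Heis 1 → Heis 1) : HasCompactSupport (lieDeriv V f) := hc.lieDeriv V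
  have hYY : ContDiff ℝ ∞ (𝐘 (𝐘 f)) := by fun_prop
  have hYX : ContDiff ℝ ∞ (𝐘 (𝐗 f)) := by fun_prop
  have hA : ContDiff ℝ 1 (𝐗 f * 𝐘 (𝐘 f) + (2⁻¹ : ℝ) • (𝐘 f * 𝐓 f)) :=
    ((hX.mul hYY).add ((hY.mul hT).const_smul (2⁻¹ : ℝ))).of_le (by norm_num)
  have hB : ContDiff ℝ 1 (𝐗 f * 𝐘 (𝐗 f) + (3 / 2 : ℝ) • (𝐗 f * 𝐓 f)) :=
    ((hX.mul hYX).add ((hX.mul hT).const_smul (3 / 2 : ℝ))).of_le (by norm_num)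
  have hC : ContDiff ℝ 1 (𝐗 f * 𝐘 f) := (hX.mul hY).of_le (by norm_num)
  have hA' : HasCompactSupport (𝐗 f * 𝐘 (𝐘 f) + (2⁻¹ : ℝ) • (𝐘 f * 𝐓 f)) :=
    (hcs _).mul_right.add (hcs _).mul_right.smul_left
  have hB' : HasCompactSupport (𝐗 f * 𝐘 (𝐗 f) + (3 / 2 : ℝ) • (𝐗 f * 𝐓 f)) :=
    (hcs _).mul_right.add (hcs _).mul_right.smul_left
  have hC' : HasCompactSupport (𝐗 f * 𝐘 f) := (hcs _).mul_right
  have iA := integrable_lieDeriv volume contDiff_xField.continuous hA hA'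
  have iB := integrable_lieDeriv volume contDiff_yField.continuous hB hB'
  have iC := integrable_lieDeriv volume contDiff_tField.continuous hC hC'
  have hT2 : HasCompactSupport (fun p => 𝐓 f p ^ 2) :=
    (hcs tField).comp_left (g := fun x : ℝ => x ^ 2) (by simp)
  have iT : Integrable (fun p => 𝐓 f p ^ 2) :=
    (hT.continuous.pow 2).integrable_of_hasCompactSupport hT2
  simp_rw [hessian_det_eq_divergence hf]
  rw [integral_sub, integral_sub, integral_sub, integral_const_mul, integral_const_mul,
    integral_lieDeriv_xField hA hA', integral_lieDeriv_yField hB hB',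
    integral_lieDeriv_tField hC hC']
  · ring
  exacts [iA, iB, iA.sub iB, iC.const_mul _, (iA.sub iB).sub (iC.const_mul _), iT.const_mul _]

end Heis

/-- For u ∈ C_c^∞(ℍ¹): ∫ det(∇²_H u) + (3/4) ∫ (Tu)² = 0. -/
theorem heisenberg1_monge_ampere_identity (u : Heis 1 → ℝ)
    (hu : ContDiff ℝ (⊤ : ℕ∞) u) (hc : HasCompactSupport u) :
    (∫ p : Heis 1,
        (((Xf 1 ⟨0, by omega⟩ (Xf 1 ⟨0, by omega⟩ u) p
            + Xf 1 ⟨0, by omega⟩ (Xf 1 ⟨0, by omega⟩ u) p) / 2)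
          * ((Xf 1 ⟨1, by omega⟩ (Xf 1 ⟨1, by omega⟩ u) p
            + Xf 1 ⟨1, by omega⟩ (Xf 1 ⟨1, by omega⟩ u) p) / 2)
        - ((Xf 1 ⟨0, by omega⟩ (Xf 1 ⟨1, by omega⟩ u) p
            + Xf 1 ⟨1, by omega⟩ (Xf 1 ⟨0, by omega⟩ u) p) / 2) ^ 2))
      + (3 / 4) * ∫ p : Heis 1, (Tf 1 u p) ^ 2 = 0 := by
  simp only [Heis.Xf_zero, Heis.Xf_one, Heis.Tf_one, add_self_div_two]
  rw [Heis.integral_hessian_det hu hc]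
  ring
end
end
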